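/- arXiv:math/0509640 — 7 statements merged into one kernel-verified Lean document; each statement's English description precedes it below -/
import Mathlib

section
/- The H-twisted Courant bracket on sections of TM ⊕ T*M, defined by [X+ξ, Y+η]_H = [X,Y] + L_X η − i_Y dξ + i_Y i_X H for a closed 3-form H, satisfies the Leibniz identity: [u,[v,w]_H]_H = [[u,v]_H,w]_H + [v,[u,w]_H]_H. -/
/-- An abstract Cartan calculus: functions `C`, vector fields `V` (a Lie algebra),
and differential forms `Ω1, Ω2, Ω3, Ω4`, with exterior derivative `d`, interior
products `i`, satisfying the standard identities of the Cartan calculus on a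
smooth manifold. -/
structure Cartan (C V Ω1 Ω2 Ω3 Ω4 : Type*) [CommRing C] [Algebra ℝ C]
    [LieRing V] [LieAlgebra ℝ V]
    [AddCommGroup Ω1] [Module ℝ Ω1] [AddCommGroup Ω2] [Module ℝ Ω2]
    [AddCommGroup Ω3] [Module ℝ Ω3] [AddCommGroup Ω4] [Module ℝ Ω4] where
  d0 : C →ₗ[ℝ] Ω1
  d1 : Ω1 →ₗ[ℝ] Ω2
  d2 : Ω2 →ₗ[ℝ] Ω3
  d3 : Ω3 →ₗ[ℝ] Ω4
  i1 : V →ₗ[ℝ] Ω1 →ₗ[ℝ] C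
  i2 : V →ₗ[ℝ] Ω2 →ₗ[ℝ] Ω1
  i3 : V →ₗ[ℝ] Ω3 →ₗ[ℝ] Ω2
  i4 : V →ₗ[ℝ] Ω4 →ₗ[ℝ] Ω3
  d1_d0 : ∀ f, d1 (d0 f) = 0
  d2_d1 : ∀ ξ, d2 (d1 ξ) = 0
  d3_d2 : ∀ β, d3 (d2 β) = 0
  i_skew2 : ∀ X Y β, i1 X (i2 Y β) = - i1 Y (i2 X β)
  i_skew3 : ∀ X Y H, i2 X (i3 Y H) = - i2 Y (i3 X H)
  i1_bracket : ∀ X Y ξ, i1 ⁅X, Y⁆ ξ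
      = i1 X (d0 (i1 Y ξ)) - i1 Y (d0 (i1 X ξ)) - i1 Y (i2 X (d1 ξ))
  i2_bracket : ∀ X Y β, i2 ⁅X, Y⁆ β
      = d0 (i1 X (i2 Y β)) + i2 X (d1 (i2 Y β))
        - i2 Y (d1 (i2 X β)) - i2 Y (i3 X (d2 β))
  i3_bracket : ∀ X Y H, i3 ⁅X, Y⁆ H
      = d1 (i2 X (i3 Y H)) + i3 X (d2 (i3 Y H))
        - i3 Y (d2 (i3 X H)) - i3 Y (i4 X (d3 H))
  sep1 : ∀ ξ : Ω1, (∀ X, i1 X ξ = 0) → ξ = 0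
  sep2 : ∀ β : Ω2, (∀ X, i2 X β = 0) → β = 0
  sep3 : ∀ H : Ω3, (∀ X, i3 X H = 0) → H = 0
  lie_faithful : ∀ X : V, (∀ ξ, d0 (i1 X ξ) + i2 X (d1 ξ) = 0) → X = 0

namespace Cartan

variable {C V Ω1 Ω2 Ω3 Ω4 : Type*} [CommRing C] [Algebra ℝ C]
    [LieRing V] [LieAlgebra ℝ V]
    [AddCommGroup Ω1] [Module ℝ Ω1] [AddCommGroup Ω2] [Module ℝ Ω2]
    [AddCommGroup Ω3] [Module ℝ Ω3] [AddCommGroup Ω4] [Module ℝ Ω4]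
    (K : Cartan C V Ω1 Ω2 Ω3 Ω4)

/-- Lie derivative on 1-forms, via Cartan's magic formula. -/
def L1 (X : V) (ξ : Ω1) : Ω1 := K.d0 (K.i1 X ξ) + K.i2 X (K.d1 ξ)

/-- Lie derivative on 2-forms. -/
def L2 (X : V) (β : Ω2) : Ω2 := K.d1 (K.i2 X β) + K.i3 X (K.d2 β)

/-- Lie derivative on 3-forms. -/
def L3 (X : V) (H : Ω3) : Ω3 := K.d2 (K.i3 X H) + K.i4 X (K.d3 H)

/-- The `H`-twisted Courant (Dorfman) bracket on sections `X + ξ` of `TM ⊕ T*M`: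
`[X+ξ, Y+η]_H = [X,Y] + L_X η − i_Y dξ + i_Y i_X H`. -/
def courant (H : Ω3) (u v : V × Ω1) : V × Ω1 :=
  (⁅u.1, v.1⁆, K.L1 u.1 v.2 - K.i2 v.1 (K.d1 u.2) + K.i2 v.1 (K.i3 u.1 H))

/-- The canonical pairing `⟨X+ξ, Y+η⟩ = ½(η(X) + ξ(Y))`. -/
noncomputable def pair (u v : V × Ω1) : C :=
  (2⁻¹ : ℝ) • (K.i1 u.1 v.2 + K.i1 v.1 u.2)

end Cartan

set_option maxHeartbeats 2000000 in
/-- The `H`-twisted Courant bracket on `TM ⊕ T*M` satisfies the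
Leibniz identity `[u,[v,w]_H]_H = [[u,v]_H,w]_H + [v,[u,w]_H]_H` when `dH = 0`. -/
theorem statement_1
    {C V Ω1 Ω2 Ω3 Ω4 : Type*} [CommRing C] [Algebra ℝ C]
    [LieRing V] [LieAlgebra ℝ V]
    [AddCommGroup Ω1] [Module ℝ Ω1] [AddCommGroup Ω2] [Module ℝ Ω2]
    [AddCommGroup Ω3] [Module ℝ Ω3] [AddCommGroup Ω4] [Module ℝ Ω4]
    (K : Cartan C V Ω1 Ω2 Ω3 Ω4) (H : Ω3) (hH : K.d3 H = 0) :
    ∀ u v w : V × Ω1,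
      K.courant H u (K.courant H v w)
        = K.courant H (K.courant H u v) w + K.courant H v (K.courant H u w) := by
  rintro ⟨X, ξ⟩ ⟨Y, η⟩ ⟨Z, ζ⟩
  refine Prod.ext (leibniz_lie X Y Z) ?_
  simp only [Cartan.courant, Cartan.L1, Prod.mk_add_mk]
  simp only [K.i1_bracket, K.i2_bracket, K.i3_bracket, map_add, map_sub,
    K.d1_d0, K.d2_d1, hH, map_zero, add_zero, sub_zero, zero_sub, zero_add]
  abel
end

section
/- For any 2-form B on M, the gauge transformation e^B: X+ξ ↦ X+ξ+i_X B intertwines twisted Courant brackets: [e^B u, e^B v]_H = e^B [u,v]_{H+dB} for all sections u, v of TM ⊕ T*M. In particular, e^B is an automorphism of the H-twisted Courant bracket if and only if dB = 0. -/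
/-- The gauge transformation `e^B : X+ξ ↦ X+ξ+i_X B` associated to a 2-form `B`. -/
def Cartan.gauge {C V Ω1 Ω2 Ω3 Ω4 : Type*} [CommRing C] [Algebra ℝ C]
    [LieRing V] [LieAlgebra ℝ V]
    [AddCommGroup Ω1] [Module ℝ Ω1] [AddCommGroup Ω2] [Module ℝ Ω2]
    [AddCommGroup Ω3] [Module ℝ Ω3] [AddCommGroup Ω4] [Module ℝ Ω4]
    (K : Cartan C V Ω1 Ω2 Ω3 Ω4) (B : Ω2) (u : V × Ω1) : V × Ω1 :=
  (u.1, u.2 + K.i2 u.1 B)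

/-- For any 2-form `B`, the gauge transformation `e^B` satisfies
`[e^B u, e^B v]_H = e^B [u,v]_{H+dB}`; in particular `e^B` is an automorphism of
the `H`-twisted Courant bracket if and only if `dB = 0`. -/
theorem statement_2 {C V Ω1 Ω2 Ω3 Ω4 : Type*} [CommRing C] [Algebra ℝ C]
    [LieRing V] [LieAlgebra ℝ V]
    [AddCommGroup Ω1] [Module ℝ Ω1] [AddCommGroup Ω2] [Module ℝ Ω2]
    [AddCommGroup Ω3] [Module ℝ Ω3] [AddCommGroup Ω4] [Module ℝ Ω4]
    (K : Cartan C V Ω1 Ω2 Ω3 Ω4) (H : Ω3) (hH : K.d3 H = 0) (B : Ω2) :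
    (∀ u v : V × Ω1,
      K.courant H (K.gauge B u) (K.gauge B v) = K.gauge B (K.courant (H + K.d2 B) u v)) ∧
    ((∀ u v : V × Ω1,
      K.courant H (K.gauge B u) (K.gauge B v) = K.gauge B (K.courant H u v)) ↔ K.d2 B = 0) := by
  have key : ∀ u v : V × Ω1,
      K.courant H (K.gauge B u) (K.gauge B v) = K.gauge B (K.courant (H + K.d2 B) u v) := by
    rintro ⟨X, ξ⟩ ⟨Y, η⟩
    simp only [Cartan.courant, Cartan.gauge, Cartan.L1, Prod.mk.injEq, map_add]
    refine ⟨trivial, ?_⟩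
    rw [K.i2_bracket X Y B]
    abel
  refine ⟨key, ?_, ?_⟩
  · intro h
    have h2 : ∀ X Y : V, K.i2 Y (K.i3 X (K.d2 B)) = 0 := by
      intro X Y
      have e := (h (X, 0) (Y, 0)).symm.trans (key (X, 0) (Y, 0))
      have e2 := congrArg Prod.snd e
      simpa [Cartan.courant, Cartan.gauge, Cartan.L1, map_add] using e2
    exact K.sep3 _ fun X => K.sep2 _ fun Y => h2 X Y
  · intro h u v
    have := key u v
    rwa [h, add_zero] at this
end

section
/- The map s: Γ(TM) → Der(E) defined in a splitting with curvature H by s(X) = (X, i_X H) satisfies [s(X), s(Y)] − s([X,Y]) = (0, d i_X i_Y H); hence the Lie algebra cocycle c(X,Y) = d i_X i_Y H represents the extension class of the derivation algebra of a split exact Courant algebroid. -/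
/-- In a splitting with curvature `H` (`dH = 0`), the splitting
`s : Γ(TM) → Der(E)`, `s(X) = (X, i_X H)`, satisfies
`[s(X), s(Y)] − s([X,Y]) = (0, d i_X i_Y H)`, where the bracket of derivations
`(X,B), (Y,B')` is `([X,Y], L_X B' − L_Y B)`.  Hence the cocycle
`c(X,Y) = d i_X i_Y H` represents the extension class of `Der(E)`. -/
theorem statement_4 {C V Ω1 Ω2 Ω3 Ω4 : Type*} [CommRing C] [Algebra ℝ C]
    [LieRing V] [LieAlgebra ℝ V]
    [AddCommGroup Ω1] [Module ℝ Ω1] [AddCommGroup Ω2] [Module ℝ Ω2]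
    [AddCommGroup Ω3] [Module ℝ Ω3] [AddCommGroup Ω4] [Module ℝ Ω4]
    (K : Cartan C V Ω1 Ω2 Ω3 Ω4) (H : Ω3) (hH : K.d3 H = 0) :
    ∀ X Y : V,
      ((⁅X, Y⁆, K.L2 X (K.i3 Y H) - K.L2 Y (K.i3 X H)) : V × Ω2)
          - (⁅X, Y⁆, K.i3 ⁅X, Y⁆ H)
        = (0, K.d1 (K.i2 X (K.i3 Y H))) := by
  intro X Y
  have h := K.i3_bracket X Y H
  rw [hH] at h
  simp only [map_zero, LinearMap.zero_apply, sub_zero] at h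
  have hs := K.i_skew3 X Y H
  rw [Prod.mk_sub_mk, sub_self]
  congr 1
  simp only [Cartan.L2, h, hs, map_neg]
  abel
end

section
/- Let (M,ω) be a symplectic manifold with a symplectic g-action ψ: g → Γ(TM) (so L_{ψ(g)}ω = 0 for all g). Then ρ: g ⊕ g → Γ(TM ⊕ T*M) defined by ρ(g,h) = X_g + i_{X_h}ω (with X_g = ψ(g)) is a morphism of Courant algebras: ρ([(g1,h1),(g2,h2)]) = [ρ(g1,h1), ρ(g2,h2)]_0, where the source carries the hemisemidirect bracket [(g1,h1),(g2,h2)] = ([g1,g2],[g1,h2]) and the target the untwisted Courant bracket. -/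
/-- Let `(M,ω)` be symplectic with a symplectic `g`-action
`ψ : g → Γ(TM)` (so `L_{ψ(a)} ω = 0`).  Then `ρ(g,h) = X_g + i_{X_h} ω` is a
morphism from the hemisemidirect product Courant algebra `g ⊕ g`, with bracket
`[(g₁,h₁),(g₂,h₂)] = ([g₁,g₂],[g₁,h₂])`, to the untwisted Courant bracket on
`TM ⊕ T*M`. -/
theorem statement_8 {C V Ω1 Ω2 Ω3 Ω4 : Type*} [CommRing C] [Algebra ℝ C]
    [LieRing V] [LieAlgebra ℝ V]
    [AddCommGroup Ω1] [Module ℝ Ω1] [AddCommGroup Ω2] [Module ℝ Ω2]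
    [AddCommGroup Ω3] [Module ℝ Ω3] [AddCommGroup Ω4] [Module ℝ Ω4]
    {g : Type*} [LieRing g] [LieAlgebra ℝ g]
    (K : Cartan C V Ω1 Ω2 Ω3 Ω4) (ω : Ω2)
    (hclosed : K.d2 ω = 0)
    (hnondeg : ∀ X : V, K.i2 X ω = 0 → X = 0)
    (ψ : g →ₗ[ℝ] V)
    (hψ : ∀ a b : g, ψ ⁅a, b⁆ = ⁅ψ a, ψ b⁆)
    (hsymp : ∀ a : g, K.L2 (ψ a) ω = 0) :
    ∀ g1 h1 g2 h2 : g,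
      K.courant 0 (ψ g1, K.i2 (ψ h1) ω) (ψ g2, K.i2 (ψ h2) ω)
        = (ψ ⁅g1, g2⁆, K.i2 (ψ ⁅g1, h2⁆) ω) := by
  intro g1 h1 g2 h2
  have key : ∀ a : g, K.d1 (K.i2 (ψ a) ω) = 0 := by
    intro a
    have h := hsymp a
    simpa [Cartan.L2, hclosed] using h
  have h2' : K.i2 ⁅ψ g1, ψ h2⁆ ω
      = K.d0 (K.i1 (ψ g1) (K.i2 (ψ h2) ω)) + K.i2 (ψ g1) (K.d1 (K.i2 (ψ h2) ω)) := by
    rw [K.i2_bracket, key g1, hclosed]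
    simp
  simp [Cartan.courant, Cartan.L1, hψ, h2', key]
end

section
/- Let E be a vector space with nondegenerate symmetric bilinear form and K ⊂ E an isotropic subspace. For any maximal isotropic (Lagrangian) subspace D ⊂ E, the subspace D_red = (D ∩ K^⊥ + K)/K of E_red = K^⊥/K is maximal isotropic with respect to the induced nondegenerate symmetric form on K^⊥/K. -/
/-- A subspace on which the bilinear form vanishes identically. -/
def IsIsotropicSub {E : Type*} [AddCommGroup E] [Module ℝ E]
    (B : LinearMap.BilinForm ℝ E) (W : Submodule ℝ E) : Prop :=
  ∀ x ∈ W, ∀ y ∈ W, B x y = 0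

/-- Orthogonal of a sup is the inf of the orthogonals. -/
lemma orthogonal_sup_aux {E : Type*} [AddCommGroup E] [Module ℝ E]
    (B : LinearMap.BilinForm ℝ E) (U V : Submodule ℝ E) :
    B.orthogonal (U ⊔ V) = B.orthogonal U ⊓ B.orthogonal V := by
  apply le_antisymm
  · exact le_inf (B.orthogonal_le le_sup_left) (B.orthogonal_le le_sup_right)
  · rintro x ⟨hxU, hxV⟩ n hn
    obtain ⟨u, hu, v, hv, rfl⟩ := Submodule.mem_sup.mp hn
    have h1 : B u x = 0 := hxU u hu
    have h2 : B v x = 0 := hxV v hv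
    simp [LinearMap.BilinForm.IsOrtho, h1, h2]

/-- Let `E` carry a nondegenerate symmetric bilinear form and let
`K ⊂ E` be isotropic.  For any maximal isotropic `D ⊂ E`, the subspace
`D_red = (D ∩ K^⊥ + K)/K` of `E_red = K^⊥/K` is maximal isotropic for the induced
form.  (Isotropic subspaces of `K^⊥/K` correspond exactly to isotropic subspaces
`W` of `E` with `K ≤ W ≤ K^⊥`, so the statement is phrased in `E`: the subspace
`D ⊓ K^⊥ ⊔ K` is isotropic, and it is maximal among isotropic subspaces
containing `K`.) -/
theorem statement_9 {E : Type*} [AddCommGroup E] [Module ℝ E] [FiniteDimensional ℝ E]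
    (B : LinearMap.BilinForm ℝ E)
    (hB : B.Nondegenerate) (hsymm : ∀ x y, B x y = B y x)
    (K D : Submodule ℝ E)
    (hK : IsIsotropicSub B K)
    (hDiso : IsIsotropicSub B D)
    (hDmax : ∀ W : Submodule ℝ E, IsIsotropicSub B W → D ≤ W → W = D) :
    IsIsotropicSub B (D ⊓ B.orthogonal K ⊔ K) ∧
    (∀ W : Submodule ℝ E, IsIsotropicSub B W → K ≤ W →
      (D ⊓ B.orthogonal K ⊔ K) ≤ W → W = D ⊓ B.orthogonal K ⊔ K) := by
  have hrefl : B.IsRefl := fun x y h => by rw [hsymm]; exact h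
  constructor
  · -- isotropy of D ⊓ K^⊥ ⊔ K
    intro x hx y hy
    obtain ⟨a, ha, b, hb, rfl⟩ := Submodule.mem_sup.mp hx
    obtain ⟨c, hc, d, hd, rfl⟩ := Submodule.mem_sup.mp hy
    have h1 : B a c = 0 := hDiso a ha.1 c hc.1
    have h2 : B a d = 0 := by rw [hsymm]; exact ha.2 d hd
    have h3 : B b c = 0 := hc.2 b hb
    have h4 : B b d = 0 := hK b hb d hd
    simp [h1, h2, h3, h4]
  · -- maximality
    intro W hWiso hKW hD'W
    refine le_antisymm ?_ hD'W
    intro w hw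
    -- w is orthogonal to D ⊓ K^⊥
    have hworth : w ∈ B.orthogonal (D ⊓ B.orthogonal K) := by
      intro n hn
      exact hWiso n (hD'W (Submodule.mem_sup_left hn)) w hw
    -- key: (D ⊓ K^⊥)^⊥ = D^⊥ ⊔ K
    have hKK : K ≤ B.orthogonal K := fun k hk n hn => hK n hn k hk
    have h1 : B.orthogonal (B.orthogonal D ⊔ K) = D ⊓ B.orthogonal K := by
      rw [orthogonal_sup_aux, B.orthogonal_orthogonal hB hrefl]
    have key : B.orthogonal (D ⊓ B.orthogonal K) = B.orthogonal D ⊔ K := by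
      rw [← h1, B.orthogonal_orthogonal hB hrefl]
    rw [key] at hworth
    obtain ⟨v, hv, k, hk, rfl⟩ := Submodule.mem_sup.mp hworth
    -- v ∈ W, hence B v v = 0
    have hvW : v ∈ W := by
      have : (v + k) - k ∈ W := Submodule.sub_mem _ hw (hKW hk)
      simpa using this
    -- D ⊔ span v is isotropic, so v ∈ D by maximality of D
    have hvD : v ∈ D := by
      have hiso : IsIsotropicSub B (D ⊔ Submodule.span ℝ {v}) := by
        intro x hx y hy
        obtain ⟨a, ha, b, hb, rfl⟩ := Submodule.mem_sup.mp hx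
        obtain ⟨c, hc, d, hd, rfl⟩ := Submodule.mem_sup.mp hy
        obtain ⟨s, rfl⟩ := Submodule.mem_span_singleton.mp hb
        obtain ⟨t, rfl⟩ := Submodule.mem_span_singleton.mp hd
        have h1 : B a c = 0 := hDiso a ha c hc
        have h2 : B a v = 0 := hv a ha
        have h3 : B v c = 0 := by rw [hsymm]; exact hv c hc
        have h4 : B v v = 0 := hWiso v hvW v hvW
        simp [h1, h2, h3, h4]
      have := hDmax _ hiso le_sup_left
      rw [← this]
      exact Submodule.mem_sup_right (Submodule.mem_span_singleton_self v)
    -- v ∈ K^⊥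
    have hvK : v ∈ B.orthogonal K := fun n hn => hWiso n (hKW hn) v hvW
    exact Submodule.mem_sup.mpr ⟨v, ⟨hvD, hvK⟩, k, hk, rfl⟩
end

section
/- Let E be a real vector space with nondegenerate symmetric bilinear form, and J₁, J₂ two commuting orthogonal complex structures such that G = J₁J₂ is positive definite (⟨Gv,v⟩ > 0 for all v ≠ 0). Let K ⊂ E be isotropic with J₁K = K. Then, writing K^G for the G-orthogonal complement of K, one has K^G = J₂(K^⊥) and the decomposition K^⊥ = K ⊕ (K^G ∩ K^⊥) is G-orthogonal; moreover K^G ∩ K^⊥ is invariant under both J₁ and J₂. -/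
/-- The bilinear form `B_G(u,v) = B(Gu, v)` for `G = J₁ ∘ J₂`. -/
def Gform {E : Type*} [AddCommGroup E] [Module ℝ E]
    (B : LinearMap.BilinForm ℝ E) (J1 J2 : E →ₗ[ℝ] E) : LinearMap.BilinForm ℝ E :=
  B.compl₁₂ (J1 ∘ₗ J2) LinearMap.id

/-!
Since `J₂` is skew-adjoint and commutes with `J₁`, `⟨J₁J₂k, v⟩ = -⟨J₁k, J₂v⟩`, so `J₂` carries
`K^G` onto `(J₁K)^⊥ = K^⊥`; as `J₂² = -1`, it also carries `K^⊥` back onto `K^G`, hence preserves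
`K^G ∩ K^⊥`, while `J₁` preserves `K^G` and `K^⊥` separately. The form `⟨G·,·⟩` is symmetric
(`G` is a product of commuting skew-adjoint maps) and positive definite, so `E = K ⊕ K^G`;
intersecting with `K^⊥ ⊇ K` and using the modular law gives `K^⊥ = K ⊕ (K^G ∩ K^⊥)`.
-/

namespace LinearMap

section CommRing

variable {R M : Type*} [CommRing R] [AddCommGroup M] [Module R M]

lemma IsOrthogonal.isSkewAdjoint {B : LinearMap.BilinForm R M} {J : M →ₗ[R] M}
    (hJ : B.IsOrthogonal J) (hJsq : J ∘ₗ J = -id) : B.IsSkewAdjoint J := by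
  intro x y
  have hJJ : J (J y) = -y := by simpa using LinearMap.congr_fun hJsq y
  have h := hJ x (J y)
  rw [hJJ, map_neg] at h
  rw [Pi.neg_apply, map_neg, ← h, neg_neg]

variable {J : M →ₗ[R] M}

lemma map_map_of_comp_self_eq_neg_id (hJsq : J ∘ₗ J = -id) (W : Submodule R M) :
    (W.map J).map J = W := by
  rw [← Submodule.map_comp, hJsq, Submodule.map_neg, Submodule.map_id]

lemma map_eq_self_of_comp_self_eq_neg_id (hJsq : J ∘ₗ J = -id) {W : Submodule R M}
    (hW : W.map J ≤ W) : W.map J = W :=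
  hW.antisymm <| by
    calc W = (W.map J).map J := (map_map_of_comp_self_eq_neg_id hJsq W).symm
      _ ≤ W.map J := Submodule.map_mono hW

lemma comap_eq_map_of_comp_self_eq_neg_id (hJsq : J ∘ₗ J = -id) (W : Submodule R M) :
    W.comap J = W.map J := by
  refine le_antisymm ?_ ?_
  · calc W.comap J = ((W.comap J).map J).map J := (map_map_of_comp_self_eq_neg_id hJsq _).symm
      _ ≤ W.map J := Submodule.map_mono (Submodule.map_comap_le J W)
  · exact Submodule.map_le_iff_le_comap.mp (map_map_of_comp_self_eq_neg_id hJsq W).le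

lemma BilinForm.map_orthogonal_le_of_isSkewAdjoint {B : LinearMap.BilinForm R M}
    (hJ : B.IsSkewAdjoint J) {N : Submodule R M} (hN : N.map J ≤ N) : (B.orthogonal N).map J ≤ B.orthogonal N := by
  rintro _ ⟨v, hv, rfl⟩ k hk
  have hJk : B (J k) v = 0 := hv (J k) (hN ⟨k, hk, rfl⟩)
  rw [hJ k v] at hJk
  simpa using hJk

end CommRing

lemma BilinForm.isCompl_orthogonal_of_anisotropic {K V : Type*} [Field K] [AddCommGroup V]
    [Module K V] [FiniteDimensional K V] {B : LinearMap.BilinForm K V} (hB : B.IsRefl)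
    {W : Submodule K V} (hW : ∀ x ∈ W, B x x = 0 → x = 0) : IsCompl W (B.orthogonal W) := by
  refine (BilinForm.isCompl_orthogonal_iff_disjoint hB).mpr ?_
  rw [Submodule.disjoint_def]
  exact fun x hxW hxW' => hW x hxW (hxW' x hxW)

end LinearMap

open LinearMap

section Gform

variable {E : Type*} [AddCommGroup E] [Module ℝ E] {B : LinearMap.BilinForm ℝ E}
  {J1 J2 : E →ₗ[ℝ] E}

lemma Gform_orthogonal_eq_comap (hJ2 : B.IsSkewAdjoint J2) (hcomm : J1 ∘ₗ J2 = J2 ∘ₗ J1)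
    (K : Submodule ℝ E) :
    (Gform B J1 J2).orthogonal K = (B.orthogonal (K.map J1)).comap J2 := by
  ext v
  simp only [BilinForm.mem_orthogonal_iff, Submodule.mem_comap,
    Submodule.mem_map, forall_exists_index, and_imp, forall_apply_eq_imp_iff₂]
  refine forall₂_congr fun k _ => ?_
  have hG : Gform B J1 J2 k v = -B (J1 k) (J2 v) := by
    rw [Gform, compl₁₂_apply, id_apply, hcomm, comp_apply, hJ2 (J1 k) v,
      Pi.neg_apply, map_neg]
  rw [hG, neg_eq_zero]

lemma Gform_isSymm (hB : B.IsSymm) (hJ1 : B.IsSkewAdjoint J1) (hJ2 : B.IsSkewAdjoint J2)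
    (hcomm : J1 ∘ₗ J2 = J2 ∘ₗ J1) : (Gform B J1 J2).IsSymm := by
  have hG : IsAdjointPair B B (J1 ∘ₗ J2) (J2 ∘ₗ J1) := fun x y => by
    simpa using hJ2.comp hJ1 x y
  refine ⟨fun x y => ?_⟩
  simp only [Gform, compl₁₂_apply, id_apply]
  rw [hG x y, ← hcomm, hB.eq]

end Gform

theorem statement_13_general {E : Type*} [AddCommGroup E] [Module ℝ E] [FiniteDimensional ℝ E]
    (B : LinearMap.BilinForm ℝ E)
    (hsymm : ∀ x y, B x y = B y x)
    (J1 J2 : E →ₗ[ℝ] E)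
    (hJ1sq : J1 ∘ₗ J1 = - LinearMap.id) (hJ2sq : J2 ∘ₗ J2 = - LinearMap.id)
    (hJ1orth : ∀ u v, B (J1 u) (J1 v) = B u v)
    (hJ2orth : ∀ u v, B (J2 u) (J2 v) = B u v)
    (hcomm : J1 ∘ₗ J2 = J2 ∘ₗ J1)
    (hpos : ∀ v : E, v ≠ 0 → 0 < B ((J1 ∘ₗ J2) v) v)
    (K : Submodule ℝ E)
    (hKiso : IsIsotropicSub B K)
    (hJ1K : K.map J1 = K) :
    (Gform B J1 J2).orthogonal K = (B.orthogonal K).map J2 ∧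
    B.orthogonal K
      = K ⊔ ((Gform B J1 J2).orthogonal K ⊓ B.orthogonal K) ∧
    K ⊓ ((Gform B J1 J2).orthogonal K ⊓ B.orthogonal K) = ⊥ ∧
    (∀ x ∈ K, ∀ y ∈ (Gform B J1 J2).orthogonal K ⊓ B.orthogonal K,
      B ((J1 ∘ₗ J2) x) y = 0) ∧
    ((Gform B J1 J2).orthogonal K ⊓ B.orthogonal K).map J1
      = (Gform B J1 J2).orthogonal K ⊓ B.orthogonal K ∧
    ((Gform B J1 J2).orthogonal K ⊓ B.orthogonal K).map J2
      = (Gform B J1 J2).orthogonal K ⊓ B.orthogonal K := by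
  have hJ1 := IsOrthogonal.isSkewAdjoint hJ1orth hJ1sq
  have hJ2 := IsOrthogonal.isSkewAdjoint hJ2orth hJ2sq
  have hKG : (Gform B J1 J2).orthogonal K = (B.orthogonal K).map J2 := by
    rw [Gform_orthogonal_eq_comap hJ2 hcomm, hJ1K, comap_eq_map_of_comp_self_eq_neg_id hJ2sq]
  have hcompl : IsCompl K ((Gform B J1 J2).orthogonal K) :=
    BilinForm.isCompl_orthogonal_of_anisotropic (Gform_isSymm ⟨hsymm⟩ hJ1 hJ2 hcomm).isRefl
      fun x _ hx => by_contra fun hx0 => (hpos x hx0).ne' hx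
  have hKle : K ≤ B.orthogonal K := fun x hx y hy => hKiso y hy x hx
  have hJ1perp : (B.orthogonal K).map J1 ≤ B.orthogonal K :=
    BilinForm.map_orthogonal_le_of_isSkewAdjoint hJ1 hJ1K.le
  have hJ1G : ((Gform B J1 J2).orthogonal K).map J1 ≤ (Gform B J1 J2).orthogonal K := by
    rw [hKG, ← Submodule.map_comp, hcomm, Submodule.map_comp]
    exact Submodule.map_mono hJ1perp
  have hJ2G : ((Gform B J1 J2).orthogonal K).map J2 = B.orthogonal K := by
    rw [hKG, map_map_of_comp_self_eq_neg_id hJ2sq]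
  refine ⟨hKG, ?_, ?_, fun x hx y hy => hy.1 x hx, ?_, ?_⟩
  · rw [← sup_inf_assoc_of_le _ hKle, hcompl.sup_eq_top, top_inf_eq]
  · exact (hcompl.disjoint.mono_right inf_le_left).eq_bot
  · exact map_eq_self_of_comp_self_eq_neg_id hJ1sq <|
      (Submodule.map_inf_le _).trans (inf_le_inf hJ1G hJ1perp)
  · refine map_eq_self_of_comp_self_eq_neg_id hJ2sq <| (Submodule.map_inf_le _).trans ?_
    rw [hJ2G, ← hKG, inf_comm]

/-- Let `E` carry a nondegenerate symmetric bilinear form, with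
`J₁, J₂` commuting orthogonal complex structures such that `G = J₁J₂` is positive
definite.  Let `K ⊂ E` be isotropic with `J₁K = K`.  Then, with `K^G` the
`G`-orthogonal of `K` (the orthogonal for the form `B_G(u,v) = ⟨Gu,v⟩`):
`K^G = J₂(K^⊥)`, the decomposition `K^⊥ = K ⊕ (K^G ∩ K^⊥)` holds and is
`G`-orthogonal, and `K^G ∩ K^⊥` is invariant under both `J₁` and `J₂`. -/
theorem statement_13 {E : Type*} [AddCommGroup E] [Module ℝ E] [FiniteDimensional ℝ E]
    (B : LinearMap.BilinForm ℝ E)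
    (hB : B.Nondegenerate) (hsymm : ∀ x y, B x y = B y x)
    (J1 J2 : E →ₗ[ℝ] E)
    (hJ1sq : J1 ∘ₗ J1 = - LinearMap.id) (hJ2sq : J2 ∘ₗ J2 = - LinearMap.id)
    (hJ1orth : ∀ u v, B (J1 u) (J1 v) = B u v)
    (hJ2orth : ∀ u v, B (J2 u) (J2 v) = B u v)
    (hcomm : J1 ∘ₗ J2 = J2 ∘ₗ J1)
    (hpos : ∀ v : E, v ≠ 0 → 0 < B ((J1 ∘ₗ J2) v) v)
    (K : Submodule ℝ E)
    (hKiso : IsIsotropicSub B K)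
    (hJ1K : K.map J1 = K) :
    (Gform B J1 J2).orthogonal K = (B.orthogonal K).map J2 ∧
    B.orthogonal K
      = K ⊔ ((Gform B J1 J2).orthogonal K ⊓ B.orthogonal K) ∧
    K ⊓ ((Gform B J1 J2).orthogonal K ⊓ B.orthogonal K) = ⊥ ∧
    (∀ x ∈ K, ∀ y ∈ (Gform B J1 J2).orthogonal K ⊓ B.orthogonal K,
      B ((J1 ∘ₗ J2) x) y = 0) ∧
    ((Gform B J1 J2).orthogonal K ⊓ B.orthogonal K).map J1
      = (Gform B J1 J2).orthogonal K ⊓ B.orthogonal K ∧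
    ((Gform B J1 J2).orthogonal K ⊓ B.orthogonal K).map J2
      = (Gform B J1 J2).orthogonal K ⊓ B.orthogonal K :=
  statement_13_general B hsymm J1 J2 hJ1sq hJ2sq hJ1orth hJ2orth hcomm hpos K hKiso hJ1K
end

section
/- Let X and Y be symplectic vector fields on (M,ω) with [X,Y] = 0 and ω(X,Y) = 0. Then the sections ρ₁ = X + i_Y ω and ρ₂ = −Y + i_X ω of TM ⊕ T*M span an isotropic subbundle K (⟨ρ₁,ρ₁⟩ = ⟨ρ₂,ρ₂⟩ = ⟨ρ₁,ρ₂⟩ = 0), and their untwisted Courant brackets vanish: [ρ₁,ρ₂] = [ρ₂,ρ₁] = [ρ₁,ρ₁] = [ρ₂,ρ₂] = 0; hence ρ defines an extended action of the abelian Lie algebra ℝ² with isotropic image. -/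
lemma real_module_neg_self {M : Type*} [AddCommGroup M] [Module ℝ M]
    {a : M} (h : a = -a) : a = 0 := by
  have h2 : (2 : ℝ) • a = 0 := by
    rw [two_smul]
    nth_rewrite 2 [h]
    simp
  have := congrArg (fun x => (2⁻¹ : ℝ) • x) h2
  simpa [smul_smul] using this

/-- Let `X, Y` be symplectic vector fields on `(M,ω)` with
`[X,Y] = 0` and `ω(X,Y) = 0`.  Then `ρ₁ = X + i_Y ω` and `ρ₂ = −Y + i_X ω` span an
isotropic subbundle (all pairings vanish) and all their untwisted Courant brackets
vanish; hence they define an extended action of the abelian Lie algebra `ℝ²` with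
isotropic image. -/
theorem statement_17 {C V Ω1 Ω2 Ω3 Ω4 : Type*} [CommRing C] [Algebra ℝ C]
    [LieRing V] [LieAlgebra ℝ V]
    [AddCommGroup Ω1] [Module ℝ Ω1] [AddCommGroup Ω2] [Module ℝ Ω2]
    [AddCommGroup Ω3] [Module ℝ Ω3] [AddCommGroup Ω4] [Module ℝ Ω4]
    (K : Cartan C V Ω1 Ω2 Ω3 Ω4) (ω : Ω2)
    (hclosed : K.d2 ω = 0)
    (hnondeg : ∀ Z : V, K.i2 Z ω = 0 → Z = 0)
    (X Y : V)
    (hX : K.L2 X ω = 0) (hY : K.L2 Y ω = 0)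
    (hcomm : ⁅X, Y⁆ = 0)
    (hperp : K.i1 Y (K.i2 X ω) = 0) :
    (K.pair (X, K.i2 Y ω) (X, K.i2 Y ω) = 0 ∧
     K.pair (-Y, K.i2 X ω) (-Y, K.i2 X ω) = 0 ∧
     K.pair (X, K.i2 Y ω) (-Y, K.i2 X ω) = 0) ∧
    (K.courant 0 (X, K.i2 Y ω) (X, K.i2 Y ω) = 0 ∧
     K.courant 0 (-Y, K.i2 X ω) (-Y, K.i2 X ω) = 0 ∧
     K.courant 0 (X, K.i2 Y ω) (-Y, K.i2 X ω) = 0 ∧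
     K.courant 0 (-Y, K.i2 X ω) (X, K.i2 Y ω) = 0) := by
  have hdX : K.d1 (K.i2 X ω) = 0 := by
    have := hX; unfold Cartan.L2 at this
    rw [hclosed] at this; simpa using this
  have hdY : K.d1 (K.i2 Y ω) = 0 := by
    have := hY; unfold Cartan.L2 at this
    rw [hclosed] at this; simpa using this
  have hXX : K.i1 X (K.i2 X ω) = 0 := real_module_neg_self (K.i_skew2 X X ω)
  have hYY : K.i1 Y (K.i2 Y ω) = 0 := real_module_neg_self (K.i_skew2 Y Y ω)
  have hXY : K.i1 X (K.i2 Y ω) = 0 := by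
    rw [K.i_skew2, hperp, neg_zero]
  constructor
  · refine ⟨?_, ?_, ?_⟩
    · simp [Cartan.pair, hXY]
    · simp [Cartan.pair, hperp]
    · simp [Cartan.pair, hXX, hYY]
  · have hYX : ⁅Y, X⁆ = (0 : V) := by
      rw [← lie_skew, hcomm, neg_zero]
    refine ⟨?_, ?_, ?_, ?_⟩ <;>
      refine Prod.ext ?_ ?_
    all_goals
      simp [Cartan.courant, Cartan.L1, hcomm, hYX, hdX, hdY, hXX, hYY, hXY, hperp]
end
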